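/- arXiv:1810.12705 — 4 statements merged into one kernel-verified Lean document; each statement's English description precedes it below -/
import Mathlib

section
/- Let φ : (-1,1) → ℝ be continuous with lim_{y→1⁻} φ(y) = +∞ and lim_{y→-1⁺} φ(y) = -∞. Let ε > 0, δ₀ ∈ (0,1), T > 0, h ∈ L^∞([0,T]), and let y : [0,T] → ℝ be a C¹ solution of ε·y' + φ(y) = h with |y(0)| ≤ 1 - δ₀ and |y(t)| ≤ 1 for all t. Then there exists δ > 0, depending only on δ₀ and ‖h‖_{L^∞([0,T])} (and independent of ε), such that |y(t)| ≤ 1 - δ for all t ∈ [0,T]. -/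
/-!
Since `φ → +∞` at `1⁻`, there is a level `a ∈ (1 - δ₀, 1)` with `φ a > M ≥ h`; on the line
`y = a` the equation gives `ε y' = h - φ a < 0`, so `y`, which starts below `a`, can never
cross it. Symmetrically `φ → -∞` at `-1⁺` yields a lower barrier `b ∈ (-1, δ₀ - 1)`. Both
barriers depend only on `δ₀` and `M`, and the sign argument never uses the size of `ε`.
-/

open Set Filter Topology

section Barrier

variable {α : Type*} [LinearOrder α] [TopologicalSpace α] [OrderTopology α] [DenselyOrdered α]
  {φ : α → ℝ} {p r : α}

theorem exists_mem_Ioo_lt_of_tendsto_atTop (hφ : Tendsto φ (𝓝[<] p) atTop) (hr : r < p)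
    (M : ℝ) : ∃ a ∈ Ioo r p, M < φ a := by
  have : (𝓝[<] p).NeBot := nhdsLT_neBot_of_exists_lt ⟨r, hr⟩
  obtain ⟨a, hMa, ha⟩ := ((hφ.eventually_gt_atTop M).and (Ioo_mem_nhdsLT hr)).exists
  exact ⟨a, ha, hMa⟩

theorem exists_mem_Ioo_lt_of_tendsto_atBot (hφ : Tendsto φ (𝓝[>] p) atBot) (hr : p < r)
    (m : ℝ) : ∃ b ∈ Ioo p r, φ b < m := by
  have : (𝓝[>] p).NeBot := nhdsGT_neBot_of_exists_gt ⟨r, hr⟩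
  obtain ⟨b, hbm, hb⟩ := ((hφ.eventually_lt_atBot m).and (Ioo_mem_nhdsGT hr)).exists
  exact ⟨b, hb, hbm⟩

end Barrier

section Comparison

variable {φ h y : ℝ → ℝ} {ε T c : ℝ}

theorem le_of_hasDerivAt_of_deriv_neg_at_level {f f' : ℝ → ℝ} {a b : ℝ}
    (hf : ∀ x ∈ Icc a b, HasDerivAt f (f' x) x) (ha : f a ≤ c)
    (hc : ∀ x ∈ Ico a b, f x = c → f' x < 0) : ∀ x ∈ Icc a b, f x ≤ c :=
  fun _ hx => image_le_of_deriv_right_lt_deriv_boundary' (B := fun _ => c) (B' := 0)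
    (fun x hx => (hf x hx).continuousAt.continuousWithinAt)
    (fun x hx => (hf x (Ico_subset_Icc_self hx)).hasDerivWithinAt) ha continuousOn_const
    (fun _ _ => hasDerivWithinAt_const _ _ _) hc hx

theorem ode_le_of_lt_apply (hε : 0 < ε) {M : ℝ} (hh : ∀ t ∈ Icc 0 T, h t ≤ M) (hφ : M < φ c)
    (hy : ∀ t ∈ Icc 0 T, HasDerivAt y ((h t - φ (y t)) / ε) t) (hy₀ : y 0 ≤ c) :
    ∀ t ∈ Icc 0 T, y t ≤ c :=
  le_of_hasDerivAt_of_deriv_neg_at_level hy hy₀ fun t ht hyt => by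
    rw [hyt]
    exact div_neg_of_neg_of_pos (by linarith [hh t (Ico_subset_Icc_self ht)]) hε

theorem ode_ge_of_apply_lt (hε : 0 < ε) {m : ℝ} (hh : ∀ t ∈ Icc 0 T, m ≤ h t) (hφ : φ c < m)
    (hy : ∀ t ∈ Icc 0 T, HasDerivAt y ((h t - φ (y t)) / ε) t) (hy₀ : c ≤ y 0) :
    ∀ t ∈ Icc 0 T, c ≤ y t := by
  have hneg : ∀ t ∈ Icc 0 T, HasDerivAt (-y) (-((h t - φ (y t)) / ε)) t :=
    fun t ht => (hy t ht).neg
  have := le_of_hasDerivAt_of_deriv_neg_at_level hneg (c := -c) (by simpa using hy₀)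
    fun t ht hyt => by
      rw [Pi.neg_apply, neg_inj] at hyt
      rw [hyt, neg_neg_iff_pos]
      exact div_pos (by linarith [hh t (Ico_subset_Icc_self ht)]) hε
  simpa using this

end Comparison

theorem singular_ode_comparison_general (φ : ℝ → ℝ)
    (htop : Filter.Tendsto φ (nhdsWithin 1 (Set.Iio 1)) Filter.atTop)
    (hbot : Filter.Tendsto φ (nhdsWithin (-1) (Set.Ioi (-1))) Filter.atBot)
    (δ₀ M : ℝ) (hδ₀ : δ₀ ∈ Set.Ioo (0 : ℝ) 1) :
    ∃ δ > (0 : ℝ), ∀ ε > (0 : ℝ), ∀ T > (0 : ℝ), ∀ h y : ℝ → ℝ,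
      (∀ t ∈ Set.Icc (0 : ℝ) T, |h t| ≤ M) →
      (∀ t ∈ Set.Icc (0 : ℝ) T, HasDerivAt y ((h t - φ (y t)) / ε) t) →
      |y 0| ≤ 1 - δ₀ →
      (∀ t ∈ Set.Icc (0 : ℝ) T, |y t| ≤ 1) →
      ∀ t ∈ Set.Icc (0 : ℝ) T, |y t| ≤ 1 - δ := by
  obtain ⟨a, ⟨hδa, ha⟩, hφa⟩ :=
    exists_mem_Ioo_lt_of_tendsto_atTop htop (by linarith [hδ₀.1] : 1 - δ₀ < 1) M
  obtain ⟨b, ⟨hb, hbδ⟩, hφb⟩ :=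
    exists_mem_Ioo_lt_of_tendsto_atBot hbot (by linarith [hδ₀.1] : -1 < δ₀ - 1) (-M)
  refine ⟨min (1 - a) (1 + b), lt_min (by linarith) (by linarith), ?_⟩
  intro ε hε T _ h y hh hy hy₀ _ t ht
  rw [abs_le] at hy₀ ⊢
  have hya := ode_le_of_lt_apply hε (fun t ht => (abs_le.mp (hh t ht)).2) hφa hy
    (by linarith) t ht
  have hby := ode_ge_of_apply_lt hε (fun t ht => (abs_le.mp (hh t ht)).1) hφb hy
    (by linarith) t ht
  constructor <;> linarith [min_le_left (1 - a) (1 + b), min_le_right (1 - a) (1 + b)]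

/-- Comparison principle for the singular ODE `ε y' + φ(y) = h`: if `φ` blows up
at `±1`, `|y 0| ≤ 1 - δ₀` and `|y| ≤ 1`, with `‖h‖_{L^∞} ≤ M`, then `|y| ≤ 1 - δ`
for some `δ > 0` depending only on `δ₀` and `M` (independent of `ε`). -/
theorem singular_ode_comparison (φ : ℝ → ℝ)
    (hc : ContinuousOn φ (Set.Ioo (-1 : ℝ) 1))
    (htop : Filter.Tendsto φ (nhdsWithin 1 (Set.Iio 1)) Filter.atTop)
    (hbot : Filter.Tendsto φ (nhdsWithin (-1) (Set.Ioi (-1))) Filter.atBot)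
    (δ₀ M : ℝ) (hδ₀ : δ₀ ∈ Set.Ioo (0 : ℝ) 1) (hM : 0 ≤ M) :
    ∃ δ > (0 : ℝ), ∀ ε > (0 : ℝ), ∀ T > (0 : ℝ), ∀ h y : ℝ → ℝ,
      (∀ t ∈ Set.Icc (0 : ℝ) T, |h t| ≤ M) →
      (∀ t ∈ Set.Icc (0 : ℝ) T, HasDerivAt y ((h t - φ (y t)) / ε) t) →
      |y 0| ≤ 1 - δ₀ →
      (∀ t ∈ Set.Icc (0 : ℝ) T, |y t| ≤ 1) →
      ∀ t ∈ Set.Icc (0 : ℝ) T, |y t| ≤ 1 - δ :=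
  singular_ode_comparison_general φ htop hbot δ₀ M hδ₀
end

section
/- Let φ : (-1,1) → ℝ be continuous with φ' ≥ -α, lim_{s→±1^∓}φ(s) = ±∞. Let θ ∈ L^∞(𝕋²) with ‖θ‖_{L^∞} ≤ 1, φ(θ) ∈ L¹(𝕋²), f ∈ L¹(𝕋²), and suppose the mean m(θ) = 0 and φ(θ) - m(φ(θ)) = f almost everywhere on 𝕋². Then |m(φ(θ))| ≤ C·(‖f‖_{L¹} + 1), where C depends only on α and φ(0) and the thresholds of φ. -/
open MeasureTheory Set

/-!
Since `φ' ≥ -α`, the function `ψ s = φ s + α s` is nondecreasing on `(-1, 1)`, so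
`(ψ θ - ψ c) (θ - c) ≥ 0` pointwise for every `c ∈ (-1, 1)`. Writing `φ θ = M + f` and
integrating, the term linear in `θ` vanishes because `m(θ) = 0`, which leaves
`c (M - ψ c) ≤ (1 + |c|) ‖f‖_{L¹} + α`. The choices `c = 1/2` and `c = -1/2` bound `M` from
above and from below.
-/

theorem monotoneOn_add_mul_of_hasDerivAt_neg_le {D : Set ℝ} (hD : Convex ℝ D) {φ φ' : ℝ → ℝ}
    {α : ℝ} (hφ : ∀ s ∈ D, HasDerivAt φ (φ' s) s) (hφ' : ∀ s ∈ D, -α ≤ φ' s) :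
    MonotoneOn (fun s => φ s + α * s) D := by
  have hψ : ∀ s ∈ D, HasDerivAt (fun s => φ s + α * s) (φ' s + α) s := fun s hs => by
    have h := (hφ s hs).add ((hasDerivAt_id' s).const_mul α)
    rwa [mul_one] at h
  refine monotoneOn_of_deriv_nonneg hD
    (fun s hs => (hψ s hs).continuousAt.continuousWithinAt)
    (fun s hs => (hψ s (interior_subset hs)).differentiableAt.differentiableWithinAt)
    (fun s hs => ?_)
  rw [(hψ s (interior_subset hs)).deriv]
  linarith [hφ' s (interior_subset hs)]

theorem MonotoneOn.sub_mul_sub_nonneg {D : Set ℝ} {ψ : ℝ → ℝ} (hψ : MonotoneOn ψ D)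
    {a b : ℝ} (ha : a ∈ D) (hb : b ∈ D) : 0 ≤ (ψ a - ψ b) * (a - b) := by
  rcases le_total a b with hab | hab
  · exact mul_nonneg_of_nonpos_of_nonpos (sub_nonpos.2 (hψ ha hb hab)) (sub_nonpos.2 hab)
  · exact mul_nonneg (sub_nonneg.2 (hψ hb ha hab)) (sub_nonneg.2 hab)

theorem mul_sub_le_of_monotoneOn_of_integral_eq_zero {Ω : Type*} [MeasurableSpace Ω]
    {μ : Measure Ω} [IsProbabilityMeasure μ] {φ : ℝ → ℝ} {α c M : ℝ} {θ f : Ω → ℝ}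
    (hα : 0 ≤ α) (hψ : MonotoneOn (fun s => φ s + α * s) (Ioo (-1) 1)) (hc : c ∈ Ioo (-1) 1)
    (hθ : Integrable θ μ) (hθ_mem : ∀ᵐ x ∂μ, θ x ∈ Ioo (-1) 1) (hθ_mean : ∫ x, θ x ∂μ = 0)
    (hf : Integrable f μ) (hφθ : ∀ᵐ x ∂μ, φ (θ x) - M = f x) :
    c * (M - (φ c + α * c)) ≤ (1 + |c|) * ∫ x, |f x| ∂μ + α := by
  set K := φ c + α * c
  have hpointwise : ∀ᵐ x ∂μ,
      c * (M - K) ≤ (M - K - α * c) * θ x + ((1 + |c|) * |f x| + α) := by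
    filter_upwards [hθ_mem, hφθ] with x hx hfx
    have hmono := hψ.sub_mul_sub_nonneg hx hc
    have hf_bound : f x * (θ x - c) ≤ (1 + |c|) * |f x| := by
      calc f x * (θ x - c) ≤ |f x| * |θ x - c| := by
            rw [← abs_mul]; exact le_abs_self _
        _ ≤ |f x| * (1 + |c|) := by
            gcongr
            exact (abs_sub _ _).trans (add_le_add_left (abs_le.2 ⟨hx.1.le, hx.2.le⟩) _)
        _ = _ := mul_comm _ _
    have hsq : α * θ x ^ 2 ≤ α := by
      refine mul_le_of_le_one_right hα ?_
      nlinarith [hx.1, hx.2]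
    rw [show φ (θ x) = f x + M by linarith] at hmono
    linarith
  have hg : Integrable (fun x => (1 + |c|) * |f x| + α) μ :=
    (hf.abs.const_mul _).add (integrable_const _)
  calc c * (M - K) = ∫ _, c * (M - K) ∂μ := by simp
    _ ≤ ∫ x, (M - K - α * c) * θ x + ((1 + |c|) * |f x| + α) ∂μ :=
        integral_mono_ae (integrable_const _) ((hθ.const_mul _).add hg) hpointwise
    _ = (1 + |c|) * ∫ x, |f x| ∂μ + α := by
        rw [integral_add (hθ.const_mul _) hg,
          integral_add (hf.abs.const_mul _) (integrable_const _),
          integral_const_mul, integral_const_mul, hθ_mean]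
        simp

instance UnitAddCircle.isProbabilityMeasure_volume :
    IsProbabilityMeasure (volume : Measure UnitAddCircle) :=
  ⟨UnitAddCircle.measure_univ⟩

theorem mean_value_estimate_general (φ φd : ℝ → ℝ) (α : ℝ) (hα : 0 < α)
    (hφd : ∀ s ∈ Set.Ioo (-1 : ℝ) 1, HasDerivAt φ (φd s) s)
    (hge : ∀ s ∈ Set.Ioo (-1 : ℝ) 1, -α ≤ φd s) :
    ∃ C > (0 : ℝ), ∀ θ f : UnitAddCircle × UnitAddCircle → ℝ,
      AEStronglyMeasurable θ volume →
      (∀ᵐ x, θ x ∈ Set.Ioo (-1 : ℝ) 1) →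
      Integrable (fun x => φ (θ x)) →
      Integrable f →
      (∫ x, θ x) = 0 →
      (∀ᵐ x, φ (θ x) - ⨍ y, φ (θ y) = f x) →
      |⨍ x, φ (θ x)| ≤ C * ((∫ x, |f x|) + 1) := by
  have hψ := monotoneOn_add_mul_of_hasDerivAt_neg_le (convex_Ioo (-1) 1) hφd hge
  set K := φ (1 / 2) + α * (1 / 2)
  set K' := φ (-(1 / 2)) + α * (-(1 / 2))
  refine ⟨3 + 2 * α + |K| + |K'|, by positivity, ?_⟩
  intro θ f hθ_meas hθ_mem _ hf hθ_mean hφθ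
  have hθ : Integrable θ := Integrable.of_bound hθ_meas 1 <| by
    filter_upwards [hθ_mem] with x hx using abs_le.2 ⟨hx.1.le, hx.2.le⟩
  set M := ⨍ x, φ (θ x)
  have hupper : 1 / 2 * (M - K) ≤ (1 + 1 / 2) * (∫ x, |f x|) + α :=
    mul_sub_le_of_monotoneOn_of_integral_eq_zero hα.le hψ (by norm_num) hθ hθ_mem hθ_mean hf
      hφθ |>.trans_eq (by norm_num)
  have hlower : -(1 / 2) * (M - K') ≤ (1 + 1 / 2) * (∫ x, |f x|) + α :=
    mul_sub_le_of_monotoneOn_of_integral_eq_zero hα.le hψ (by norm_num) hθ hθ_mem hθ_mean hf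
      hφθ |>.trans_eq (by norm_num)
  have hslack : 0 ≤ (2 * α + |K| + |K'|) * ∫ x, |f x| := by positivity
  rw [abs_le]
  constructor
  · linarith [neg_abs_le K', abs_nonneg K]
  · linarith [le_abs_self K, abs_nonneg K']

/-- Mean-value estimate for the singular chemical potential on the 2-torus:
if `m(θ) = 0` and `φ(θ) - m(φ(θ)) = f` a.e., then `|m(φ(θ))| ≤ C(‖f‖_{L¹} + 1)`
with `C` depending only on `φ` (through `α`, `φ(0)` and its thresholds). -/
theorem mean_value_estimate (φ φd : ℝ → ℝ) (α : ℝ) (hα : 0 < α)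
    (hc : ContinuousOn φ (Set.Ioo (-1 : ℝ) 1))
    (htop : Filter.Tendsto φ (nhdsWithin 1 (Set.Iio 1)) Filter.atTop)
    (hbot : Filter.Tendsto φ (nhdsWithin (-1) (Set.Ioi (-1))) Filter.atBot)
    (hφd : ∀ s ∈ Set.Ioo (-1 : ℝ) 1, HasDerivAt φ (φd s) s)
    (hge : ∀ s ∈ Set.Ioo (-1 : ℝ) 1, -α ≤ φd s) :
    ∃ C > (0 : ℝ), ∀ θ f : UnitAddCircle × UnitAddCircle → ℝ,
      AEStronglyMeasurable θ volume →
      (∀ᵐ x, θ x ∈ Set.Ioo (-1 : ℝ) 1) →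
      Integrable (fun x => φ (θ x)) →
      Integrable f →
      (∫ x, θ x) = 0 →
      (∀ᵐ x, φ (θ x) - ⨍ y, φ (θ y) = f x) →
      |⨍ x, φ (θ x)| ≤ C * ((∫ x, |f x|) + 1) :=
  mean_value_estimate_general φ φd α hα hφd hge
end

section
/- For any f ∈ H^s(𝕋²) with s > 1, there holds ‖f‖_{L^∞(𝕋²)} ≤ C·(1 + ‖f‖_{H^1(𝕋²)})·(log(e + ‖f‖_{H^s(𝕋²)}))^{1/2}, where C depends only on s. -/
/-- The Fourier mode `e^{i n·x}` on the 2-torus, `n ∈ ℤ²`. -/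
noncomputable def fourierMode2 (n : ℤ × ℤ) (x : ℝ × ℝ) : ℂ :=
  Complex.exp (Complex.I * ((n.1 : ℂ) * (x.1 : ℂ) + (n.2 : ℂ) * (x.2 : ℂ)))

/-!
Write `w n = 1 + |n|²` and `f = ∑ c n e^{i n·x}`. Pointwise `|f x| ≤ ∑ |c n|`, and Cauchy–Schwarz
with the weight `ρ = w + w ^ s / μ` gives
`∑ |c n| ≤ (∑ ρ⁻¹)^{1/2} (‖f‖²_{H¹} + ‖f‖²_{H^s} / μ)^{1/2}`.
Split `ℤ²` at `w ≤ R` with `R ^ ((s - 1) / 2) = μ`. The low frequencies contribute at most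
`∑_{w ≤ R} w⁻¹ = O(log R)`: the square shell `max |nᵢ| = k` has `8 k` points, on which `w ≥ 1 + k²`.
On the high frequencies `ρ⁻¹ ≤ w ^ (-(s + 1) / 2)`, which is summable.
The choice `μ = (e + ‖f‖_{H^s})²` bounds the `H^s` term by `1` and `log R` by a multiple of
`log (e + ‖f‖_{H^s})`.
-/

namespace BrezisGallouet

open Finset Real

theorem summable_and_tsum_le_sqrt_mul_sqrt {ι : Type*} {a ρ : ι → ℝ} (ha : ∀ i, 0 ≤ a i)
    (hρ : ∀ i, 0 < ρ i) (hρ_inv : Summable fun i => (ρ i)⁻¹)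
    (hρa : Summable fun i => ρ i * a i ^ 2) :
    Summable a ∧ ∑' i, a i ≤ √(∑' i, (ρ i)⁻¹) * √(∑' i, ρ i * a i ^ 2) := by
  have hf : ∀ i, √(ρ i)⁻¹ ^ (2 : ℝ) = (ρ i)⁻¹ := fun i => by
    rw [rpow_two, sq_sqrt (inv_nonneg.2 (hρ i).le)]
  have hg : ∀ i, (√(ρ i) * a i) ^ (2 : ℝ) = ρ i * a i ^ 2 := fun i => by
    rw [rpow_two, mul_pow, sq_sqrt (hρ i).le]
  have hfg : ∀ i, √(ρ i)⁻¹ * (√(ρ i) * a i) = a i := fun i => by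
    rw [← mul_assoc, ← sqrt_mul (inv_nonneg.2 (hρ i).le), inv_mul_cancel₀ (hρ i).ne', sqrt_one,
      one_mul]
  have H := summable_and_inner_le_Lp_mul_Lq_tsum_of_nonneg HolderConjugate.two_two
    (f := fun i => √(ρ i)⁻¹) (g := fun i => √(ρ i) * a i) (fun i => sqrt_nonneg _)
    (fun i => mul_nonneg (sqrt_nonneg _) (ha i)) (by simpa only [hf] using hρ_inv)
    (by simpa only [hg] using hρa)
  simp only [hf, hg, hfg] at H
  rwa [← sqrt_eq_rpow, ← sqrt_eq_rpow] at H

theorem summable_and_tsum_le_of_mem_box {g : ℤ × ℤ → ℝ} {h : ℕ → ℝ} (hg : ∀ n, 0 ≤ g n)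
    (hh : ∀ k, 0 ≤ h k) (hgh : ∀ k, ∀ n ∈ box k, g n ≤ h k)
    (hsum : Summable fun k => #(box k : Finset (ℤ × ℤ)) * h k) :
    Summable g ∧ ∑' n, g n ≤ ∑' k, #(box k : Finset (ℤ × ℤ)) * h k := by
  classical
  suffices H : ∀ u : Finset (ℤ × ℤ), ∑ n ∈ u, g n ≤ ∑' k, #(box k : Finset (ℤ × ℤ)) * h k from
    ⟨summable_of_sum_le hg H, Real.tsum_le_of_sum_le hg H⟩
  intro u
  let m : ℤ × ℤ → ℕ := fun n => max n.1.natAbs n.2.natAbs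
  calc ∑ n ∈ u, g n ≤ ∑ n ∈ u, h (m n) := sum_le_sum fun n _ => hgh _ n (Int.mem_box.2 rfl)
    _ = ∑ k ∈ u.image m, #{n ∈ u | m n = k} • h k := sum_comp h m
    _ ≤ ∑ k ∈ u.image m, #(box k : Finset (ℤ × ℤ)) * h k := by
      refine sum_le_sum fun k _ => ?_
      rw [nsmul_eq_mul]
      gcongr
      · exact hh k
      · exact fun n hn => Int.mem_box.2 (mem_filter.1 hn).2
    _ ≤ _ := hsum.sum_le_tsum _ fun k _ => mul_nonneg (Nat.cast_nonneg _) (hh k)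

abbrev weight (n : ℤ × ℤ) : ℝ := 1 + ((n.1 : ℝ) ^ 2 + (n.2 : ℝ) ^ 2)

lemma one_le_weight (n : ℤ × ℤ) : 1 ≤ weight n :=
  le_add_of_nonneg_right (by positivity)

lemma one_add_sq_le_weight_of_mem_box {n : ℤ × ℤ} {k : ℕ} (hn : n ∈ box k) :
    1 + (k : ℝ) ^ 2 ≤ weight n := by
  rw [Int.mem_box] at hn
  have h1 : ((n.1.natAbs : ℝ)) ^ 2 = (n.1 : ℝ) ^ 2 := by rw [Nat.cast_natAbs, Int.cast_abs, sq_abs]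
  have h2 : ((n.2.natAbs : ℝ)) ^ 2 = (n.2 : ℝ) ^ 2 := by rw [Nat.cast_natAbs, Int.cast_abs, sq_abs]
  rcases max_choice n.1.natAbs n.2.natAbs with h | h <;> rw [h] at hn <;> subst hn <;>
    simp only [weight] <;> nlinarith [sq_nonneg (n.1 : ℝ), sq_nonneg (n.2 : ℝ)]

lemma summable_weight_rpow_neg {t : ℝ} (ht : 1 < t) : Summable fun n => weight n ^ (-t) := by
  refine (summable_and_tsum_le_of_mem_box (g := fun n => weight n ^ (-t))
    (h := fun k : ℕ => (1 + (k : ℝ) ^ 2) ^ (-t))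
    (fun n => by positivity) (fun k => by positivity) (fun k n hn => ?_) ?_).1
  · exact rpow_le_rpow_of_nonpos (by positivity) (one_add_sq_le_weight_of_mem_box hn) (by linarith)
  · refine ((summable_nat_rpow.2 (by linarith : 1 - 2 * t < -1)).mul_left 8)
      |>.of_norm_bounded_eventually_nat ?_
    filter_upwards [Filter.eventually_gt_atTop 0] with k hk
    have hk' : (0 : ℝ) < k := by exact_mod_cast hk
    rw [Int.card_box hk.ne', norm_of_nonneg (by positivity), Nat.cast_mul, Nat.cast_ofNat,
      mul_assoc, sub_eq_add_neg, rpow_add hk', rpow_one, show -(2 * t) = 2 * -t by ring, rpow_mul hk'.le]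
    gcongr 8 * (_ * ?_)
    exact rpow_le_rpow_of_nonpos (by positivity) (by rw [rpow_two]; linarith) (by linarith)

lemma sum_range_card_box_mul_inv_le (K : ℕ) :
    ∑ k ∈ range (K + 1), (#(box k : Finset (ℤ × ℤ)) : ℝ) * (1 + (k : ℝ) ^ 2)⁻¹ ≤ 9 + 8 * log K := by
  rw [sum_range_succ']
  have hterm : ∀ k ∈ range K, (#(box (k + 1) : Finset (ℤ × ℤ)) : ℝ) * (1 + ((k + 1 : ℕ) : ℝ) ^ 2)⁻¹
      ≤ 8 * ((k + 1 : ℕ) : ℝ)⁻¹ := fun k _ => by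
    rw [Int.card_box k.succ_ne_zero]
    have : (0 : ℝ) < (k + 1 : ℕ) := by positivity
    rw [Nat.cast_mul, Nat.cast_ofNat, mul_assoc]
    gcongr
    rw [mul_inv_le_iff₀ (by positivity)]
    field_simp
    nlinarith
  calc _ ≤ ∑ k ∈ range K, 8 * ((k + 1 : ℕ) : ℝ)⁻¹ + 1 := by
        simpa using sum_le_sum hterm
    _ = 8 * harmonic K + 1 := by rw [← mul_sum]; simp [harmonic]
    _ ≤ 9 + 8 * log K := by linarith [harmonic_le_one_add_log K]

lemma summable_and_tsum_inv_weight_le {R : ℝ} (hR : 1 ≤ R) :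
    Summable (fun n => if weight n ≤ R then (weight n)⁻¹ else 0) ∧
      ∑' n, (if weight n ≤ R then (weight n)⁻¹ else 0) ≤ 9 + 4 * log R := by
  set K := ⌊√R⌋₊
  have hbox := summable_and_tsum_le_of_mem_box
    (g := fun n => if weight n ≤ R then (weight n)⁻¹ else 0)
    (h := fun k => if k ≤ K then (1 + (k : ℝ) ^ 2)⁻¹ else 0)
    (fun n => by split_ifs <;> positivity) (fun k => by split_ifs <;> positivity)
    (fun k n hn => ?_) (summable_of_ne_finset_zero (s := range (K + 1)) fun k hk => ?_)
  · refine ⟨hbox.1, hbox.2.trans ?_⟩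
    rw [tsum_eq_sum (s := range (K + 1)) fun k hk => ?_]
    · calc _ = ∑ k ∈ range (K + 1), (#(box k : Finset (ℤ × ℤ)) : ℝ) * (1 + (k : ℝ) ^ 2)⁻¹ :=
            sum_congr rfl fun k hk => by rw [if_pos (Nat.lt_succ_iff.1 (mem_range.1 hk))]
        _ ≤ 9 + 8 * log K := sum_range_card_box_mul_inv_le K
        _ ≤ 9 + 8 * log √R := by
          have : log K ≤ log √R := by
            rcases Nat.eq_zero_or_pos K with hK | hK
            · rw [hK, Nat.cast_zero, log_zero]; exact log_nonneg (one_le_sqrt.2 hR)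
            · exact log_le_log (by exact_mod_cast hK) (Nat.floor_le (sqrt_nonneg R))
          linarith
        _ = 9 + 4 * log R := by rw [log_sqrt (by linarith)]; ring
    · rw [if_neg (by simpa using hk), mul_zero]
  · have hk := one_add_sq_le_weight_of_mem_box hn
    split_ifs with hnR hkK hkK
    · exact inv_anti₀ (by positivity) hk
    · exact absurd (Nat.le_floor (le_sqrt_of_sq_le (by linarith))) hkK
    · positivity
    · rfl
  · rw [if_neg (by simpa using hk), mul_zero]

lemma inv_add_rpow_div_le {s μ R w : ℝ} (hs : 1 ≤ s) (hw : 0 < w) (hμ : 0 < μ) (hR : 0 ≤ R)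
    (hμR : μ ≤ R ^ ((s - 1) / 2)) :
    (w + w ^ s / μ)⁻¹ ≤ (if w ≤ R then w⁻¹ else 0) + w ^ (-((s + 1) / 2)) := by
  split_ifs with hwR
  · have : (w + w ^ s / μ)⁻¹ ≤ w⁻¹ := inv_anti₀ hw (le_add_of_nonneg_right (by positivity))
    linarith [rpow_nonneg hw.le (-((s + 1) / 2))]
  · calc (w + w ^ s / μ)⁻¹ ≤ (w ^ s / μ)⁻¹ :=
          inv_anti₀ (by positivity) (le_add_of_nonneg_left hw.le)
      _ = μ * w ^ (-s) := by rw [inv_div, div_eq_mul_inv, rpow_neg hw.le]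
      _ ≤ w ^ ((s - 1) / 2) * w ^ (-s) := by
        gcongr
        exact hμR.trans (rpow_le_rpow hR (not_le.1 hwR).le (by linarith))
      _ = 0 + w ^ (-((s + 1) / 2)) := by rw [← rpow_add hw, zero_add]; ring_nf

lemma summable_and_tsum_inv_weight_add_le {s μ : ℝ} (hs : 1 < s) (hμ : 1 ≤ μ) :
    Summable (fun n => (weight n + weight n ^ s / μ)⁻¹) ∧
      ∑' n, (weight n + weight n ^ s / μ)⁻¹
        ≤ 9 + 8 / (s - 1) * log μ + ∑' n, weight n ^ (-((s + 1) / 2)) := by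
  set R := μ ^ (2 / (s - 1))
  have hR : 1 ≤ R := one_le_rpow hμ (by have := sub_pos.2 hs; positivity)
  have hμR : μ = R ^ ((s - 1) / 2) := by
    rw [← rpow_mul (by linarith), div_mul_div_comm, mul_comm, div_self (by nlinarith), rpow_one]
  have hlow := summable_and_tsum_inv_weight_le hR
  have hhigh := summable_weight_rpow_neg (t := (s + 1) / 2) (by linarith)
  have hle : ∀ n, (weight n + weight n ^ s / μ)⁻¹
      ≤ (if weight n ≤ R then (weight n)⁻¹ else 0) + weight n ^ (-((s + 1) / 2)) := fun n =>
    inv_add_rpow_div_le hs.le (by linarith [one_le_weight n]) (by linarith) (by linarith) hμR.le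
  have hsum := Summable.of_nonneg_of_le (fun n => by have := one_le_weight n; positivity) hle
    (hlow.1.add hhigh)
  refine ⟨hsum, (hsum.tsum_mono (hlow.1.add hhigh) hle).trans ?_⟩
  rw [hlow.1.tsum_add hhigh]
  have : 4 * log R = 8 / (s - 1) * log μ := by
    rw [log_rpow (by linarith)]; ring
  linarith [hlow.2]

lemma norm_fourierMode2 (n : ℤ × ℤ) (x : ℝ × ℝ) : ‖fourierMode2 n x‖ = 1 := by
  rw [fourierMode2, Complex.norm_exp]; simp

lemma norm_tsum_mul_fourierMode2_le {c : ℤ × ℤ → ℂ} (hc : Summable fun n => ‖c n‖) (x : ℝ × ℝ) :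
    ‖∑' n, c n * fourierMode2 n x‖ ≤ ∑' n, ‖c n‖ := by
  have h : ∀ n, ‖c n * fourierMode2 n x‖ = ‖c n‖ := fun n => by
    rw [norm_mul, norm_fourierMode2, mul_one]
  exact (norm_tsum_le_tsum_norm (hc.congr fun n => (h n).symm)).trans_eq (tsum_congr h)

noncomputable def brezisGallouetConst (s : ℝ) : ℝ :=
  9 + 16 / (s - 1) + ∑' n, weight n ^ (-((s + 1) / 2))

lemma brezisGallouetConst_pos {s : ℝ} (hs : 1 < s) : 0 < brezisGallouetConst s := by
  have := sub_pos.2 hs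
  have : 0 ≤ ∑' n, weight n ^ (-((s + 1) / 2)) :=
    tsum_nonneg fun n => rpow_nonneg (by linarith [one_le_weight n]) _
  unfold brezisGallouetConst
  positivity

theorem summable_and_tsum_norm_le {s : ℝ} (hs : 1 < s) {c : ℤ × ℤ → ℂ}
    (hc : Summable fun n => weight n ^ s * ‖c n‖ ^ 2) :
    Summable (fun n => ‖c n‖) ∧
      ∑' n, ‖c n‖ ≤ √(brezisGallouetConst s) * (1 + √(∑' n, weight n * ‖c n‖ ^ 2))
        * √(log (exp 1 + √(∑' n, weight n ^ s * ‖c n‖ ^ 2))) := by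
  set A := ∑' n, weight n * ‖c n‖ ^ 2
  set B := ∑' n, weight n ^ s * ‖c n‖ ^ 2
  set E := exp 1 + √B
  set μ := E ^ 2
  have hw : ∀ n, 0 < weight n := fun n => by linarith [one_le_weight n]
  have hA : Summable fun n => weight n * ‖c n‖ ^ 2 :=
    hc.of_nonneg_of_le (fun n => by have := hw n; positivity) fun n => by
      gcongr; exact self_le_rpow_of_one_le (one_le_weight n) hs.le
  have hE : exp 1 ≤ E := le_add_of_nonneg_right (sqrt_nonneg B)
  have hL : 1 ≤ log E := by simpa using log_le_log (exp_pos 1) hE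
  have hμ : 1 ≤ μ := one_le_pow₀ (by linarith [add_one_le_exp 1])
  have hBμ : B / μ ≤ 1 := by
    have hB : 0 ≤ B := tsum_nonneg fun n => by have := hw n; positivity
    rw [div_le_one (by linarith)]
    calc B = √B ^ 2 := (sq_sqrt hB).symm
      _ ≤ μ := pow_le_pow_left₀ (sqrt_nonneg B) (le_add_of_nonneg_left (exp_pos 1).le) 2
  have hρc : HasSum (fun n => (weight n + weight n ^ s / μ) * ‖c n‖ ^ 2) (A + B / μ) := by
    convert hA.hasSum.add (hc.hasSum.div_const μ) using 1
    ext n; ring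
  obtain ⟨hρ, hρ_le⟩ := summable_and_tsum_inv_weight_add_le hs hμ
  obtain ⟨hsum, hcs⟩ := summable_and_tsum_le_sqrt_mul_sqrt (fun n => norm_nonneg (c n))
    (fun n => by have := hw n; positivity) hρ hρc.summable
  refine ⟨hsum, hcs.trans ?_⟩
  have hlow : ∑' n, (weight n + weight n ^ s / μ)⁻¹ ≤ brezisGallouetConst s * log E := by
    rw [log_pow, Nat.cast_ofNat] at hρ_le
    unfold brezisGallouetConst
    set T := ∑' n, weight n ^ (-((s + 1) / 2))
    have hT : 0 ≤ T := tsum_nonneg fun n => rpow_nonneg (hw n).le _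
    have : (9 + 16 / (s - 1) + T) * log E - (9 + 8 / (s - 1) * (2 * log E) + T)
        = (9 + T) * (log E - 1) := by ring
    linarith [mul_nonneg (by linarith : 0 ≤ 9 + T) (sub_nonneg.2 hL)]
  have hhigh : √(A + B / μ) ≤ 1 + √A := by
    rw [sqrt_le_iff]
    refine ⟨by positivity, ?_⟩
    nlinarith [sq_sqrt (tsum_nonneg fun n => by have := hw n; positivity : 0 ≤ A), sqrt_nonneg A]
  calc √(∑' n, (weight n + weight n ^ s / μ)⁻¹) * √(∑' n, (weight n + weight n ^ s / μ) * ‖c n‖ ^ 2)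
      ≤ √(brezisGallouetConst s * log E) * (1 + √A) := by
        rw [hρc.tsum_eq]; gcongr
    _ = √(brezisGallouetConst s) * (1 + √A) * √(log E) := by
        rw [sqrt_mul (brezisGallouetConst_pos hs).le]; ring

end BrezisGallouet

open BrezisGallouet in
/-- Brezis–Gallouet logarithmic Sobolev inequality on the 2-torus: for `s > 1`
there is `C = C(s)` with
`‖f‖_{L^∞} ≤ C (1 + ‖f‖_{H¹}) (log(e + ‖f‖_{H^s}))^{1/2}` for all `f ∈ H^s(𝕋²)`. -/
theorem brezis_gallouet (s : ℝ) (hs : 1 < s) :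
    ∃ C > (0 : ℝ), ∀ c : ℤ × ℤ → ℂ,
      Summable (fun n : ℤ × ℤ =>
        (1 + ((n.1 : ℝ) ^ 2 + (n.2 : ℝ) ^ 2)) ^ s * ‖c n‖ ^ 2) →
      ∀ x : ℝ × ℝ,
        ‖∑' n : ℤ × ℤ, c n * fourierMode2 n x‖ ≤
          C * (1 + (∑' n : ℤ × ℤ,
                (1 + ((n.1 : ℝ) ^ 2 + (n.2 : ℝ) ^ 2)) * ‖c n‖ ^ 2) ^ ((1 : ℝ) / 2))
            * Real.sqrt (Real.log (Real.exp 1 +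
                (∑' n : ℤ × ℤ,
                  (1 + ((n.1 : ℝ) ^ 2 + (n.2 : ℝ) ^ 2)) ^ s * ‖c n‖ ^ 2) ^ ((1 : ℝ) / 2))) := by
  refine ⟨√(brezisGallouetConst s), Real.sqrt_pos.2 (brezisGallouetConst_pos hs), fun c hc x => ?_⟩
  obtain ⟨hsum, hle⟩ := summable_and_tsum_norm_le hs hc
  rw [← Real.sqrt_eq_rpow, ← Real.sqrt_eq_rpow]
  exact (norm_tsum_mul_fourierMode2_le hsum x).trans hle
end

section
/- Let N ≥ 1, L > 0 with 2L/N ≤ 1/2, and let h, z ≥ 0 be real numbers. Then h·z·e^{Lz} ≤ (1/2)·z²·e^{Lz} + e^{Nh}. -/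
/-- Pointwise Young-type inequality: for `N ≥ 1`, `L > 0` with `2L/N ≤ 1/2`, and
`h, z ≥ 0`, one has `h z e^{Lz} ≤ (1/2) z² e^{Lz} + e^{Nh}`. -/
theorem young_exponential (N L h z : ℝ) (hN : 1 ≤ N) (hL : 0 < L)
    (hLN : 2 * L / N ≤ 1 / 2) (hh : 0 ≤ h) (hz : 0 ≤ z) :
    h * z * Real.exp (L * z) ≤ (1 / 2) * z ^ 2 * Real.exp (L * z) + Real.exp (N * h) := by
  rcases le_or_gt h (z / 2) with hc | hc
  · -- In this case h*z ≤ (1/2) z², done by positivity of exp.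
    nlinarith [Real.exp_pos (N * h), Real.exp_nonneg (L * z),
      mul_le_mul_of_nonneg_right (show h * z ≤ 1/2 * z^2 by nlinarith)
        (Real.exp_nonneg (L * z))]
  · have hN0 : (0:ℝ) < N := by linarith
    have hLN' : L ≤ N / 4 := by
      rw [div_le_iff₀ hN0] at hLN; linarith
    have hu : 0 ≤ h - z / 4 := by linarith
    -- key: u² ≤ exp u for u ≥ 0
    have key : ∀ u : ℝ, 0 ≤ u → u ^ 2 ≤ Real.exp u := by
      intro u hu0
      have h1 : u / 2 ≤ Real.exp (u / 2 - 1) := by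
        have := Real.add_one_le_exp (u / 2 - 1); linarith
      have h2 : u ≤ Real.exp (u / 2) := by
        have hsplit : Real.exp (u / 2) = Real.exp (u / 2 - 1) * Real.exp 1 := by
          rw [← Real.exp_add]; ring_nf
        have he : (2:ℝ) ≤ Real.exp 1 := by
          have := Real.add_one_le_exp (1:ℝ); linarith
        rw [hsplit]
        nlinarith [Real.exp_pos (u / 2 - 1)]
      calc u ^ 2 ≤ (Real.exp (u / 2)) ^ 2 := by nlinarith [Real.exp_nonneg (u / 2)]
        _ = Real.exp u := by rw [sq, ← Real.exp_add]; ring_nf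
    have e1 : Real.exp (L * z) ≤ Real.exp (N * z / 4) := by
      apply Real.exp_le_exp.2; nlinarith
    have e2 : h * z - z ^ 2 / 2 ≤ (h - z / 4) ^ 2 := by nlinarith [sq_nonneg (h - 3 * z / 4)]
    have e3 : (h - z / 4) ^ 2 ≤ Real.exp (h - z / 4) := key _ hu
    have e4 : Real.exp (h - z / 4) ≤ Real.exp (N * (h - z / 4)) := by
      apply Real.exp_le_exp.2; nlinarith
    have hnn : 0 ≤ h * z - z ^ 2 / 2 := by nlinarith
    have main : Real.exp (L * z) * (h * z - z ^ 2 / 2) ≤ Real.exp (N * h) := by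
      have hsplit : Real.exp (N * h) = Real.exp (N * z / 4) * Real.exp (N * (h - z / 4)) := by
        rw [← Real.exp_add]; ring_nf
      rw [hsplit]
      exact mul_le_mul e1 (le_trans e2 (le_trans e3 e4)) hnn (Real.exp_nonneg _)
    nlinarith [main]
end
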